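/- In the asymmetric rendezvous game on the line (no gifts), if (f, g) is a Nash equilibrium strategy pair, then on each maximal open time interval between consecutive meeting times t^i (times when Player I meets an agent of Player II), each player's path is linear with slope +1 or −1, i.e. each player moves at unit speed without turning between his own meeting events. -/
import Mathlib


/-- A rendezvous strategy path: unit speed (1-Lipschitz), starting at `0`. -/
def IsPath (f : ℝ → ℝ) : Prop := f 0 = 0 ∧ LipschitzWith 1 f

/-- The meeting time `min {t : s₁ f(t) + s₂ g(t) = D}`. -/
noncomputable def meetT (D : ℝ) (f g : ℝ → ℝ) (s₁ s₂ : ℝ) : ℝ :=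
  sInf {t : ℝ | 0 ≤ t ∧ s₁ * f t + s₂ * g t = D}

/-- The rendezvous time: the average of the four meeting times. -/
noncomputable def RT (D : ℝ) (f g : ℝ → ℝ) : ℝ :=
  (meetT D f g 1 1 + meetT D f g (-1) (-1) + meetT D f g (-1) 1 + meetT D f g 1 (-1)) / 4

/-- The set of the four meeting times. -/
noncomputable def MeetSet (D : ℝ) (f g : ℝ → ℝ) : Set ℝ :=
  {meetT D f g 1 1, meetT D f g (-1) (-1), meetT D f g (-1) 1, meetT D f g 1 (-1)}


/- helper: basic facts -/
lemma lipAbs {f : ℝ → ℝ} (hf : LipschitzWith 1 f) (x y : ℝ) : |f x - f y| ≤ |x - y| := by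
  have := hf.dist_le_mul x y
  simpa [Real.dist_eq] using this

lemma meetT_nonneg (D : ℝ) (f g : ℝ → ℝ) (s₁ s₂ : ℝ) : 0 ≤ meetT D f g s₁ s₂ :=
  Real.sInf_nonneg (fun _ hx => hx.1)

-- if nothing on [0,t] hits D, then value at t is < D
lemma valLtD (D : ℝ) (hD : 0 < D) (f g : ℝ → ℝ) (hf : IsPath f) (hg : IsPath g)
    (σ₁ σ₂ : ℝ) (t : ℝ) (ht : 0 ≤ t)
    (hno : ∀ t', 0 ≤ t' → t' ≤ t → σ₁ * f t' + σ₂ * g t' ≠ D) :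
    σ₁ * f t + σ₂ * g t < D := by
  set V : ℝ → ℝ := fun u => σ₁ * f u + σ₂ * g u with hV
  have hVc : Continuous V :=
    ((continuous_const.mul hf.2.continuous).add (continuous_const.mul hg.2.continuous))
  have hV0 : V 0 = 0 := by simp [hV, hf.1, hg.1]
  by_contra h
  push_neg at h
  rcases lt_or_eq_of_le h with h' | h'
  · have hmem : D ∈ Set.Icc (V 0) (V t) := ⟨by rw [hV0]; exact hD.le, h⟩
    obtain ⟨t', ht', hVt'⟩ := intermediate_value_Icc ht hVc.continuousOn hmem
    exact hno t' ht'.1 ht'.2 hVt'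
  · exact hno t ht le_rfl h'.symm

lemma lipOfAbs {f : ℝ → ℝ} (h : ∀ x y, |f x - f y| ≤ |x - y|) : LipschitzWith 1 f :=
  LipschitzWith.of_dist_le_mul (fun x y => by
    rw [Real.dist_eq, Real.dist_eq]; simpa using h x y)

/-- The modified (envelope) path, written globally. -/
noncomputable def modF (f : ℝ → ℝ) (s₁ a b ε : ℝ) : ℝ → ℝ :=
  fun t => max (s₁ * f t)
    (min (min (s₁ * f t + ε) (s₁ * f a + (t - a))) (s₁ * f b + (b - t)))

noncomputable def modf (f : ℝ → ℝ) (s₁ a b ε : ℝ) : ℝ → ℝ :=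
  fun t => s₁ * modF f s₁ a b ε t

section modlems
variable {f : ℝ → ℝ} {s₁ a b ε : ℝ}

lemma sgn_abs (hs : s₁ = 1 ∨ s₁ = -1) : |s₁| = 1 := by rcases hs with h | h <;> rw [h] <;> norm_num

lemma sgn_sq (hs : s₁ = 1 ∨ s₁ = -1) : s₁ * s₁ = 1 := by rcases hs with h | h <;> rw [h] <;> norm_num

lemma sFabs (hf : LipschitzWith 1 f) (hs : s₁ = 1 ∨ s₁ = -1) (x y : ℝ) :
    |s₁ * f x - s₁ * f y| ≤ |x - y| := by
  calc |s₁ * f x - s₁ * f y| = |s₁| * |f x - f y| := by rw [← abs_mul]; ring_nf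
  _ = |f x - f y| := by rw [sgn_abs hs, one_mul]
  _ ≤ |x - y| := lipAbs hf x y

lemma modF_abs (hf : LipschitzWith 1 f) (hs : s₁ = 1 ∨ s₁ = -1) (x y : ℝ) :
    |modF f s₁ a b ε x - modF f s₁ a b ε y| ≤ |x - y| := by
  have h1 := sFabs hf hs x y
  have h2 : |(s₁ * f x + ε) - (s₁ * f y + ε)| ≤ |x - y| := by
    have := sFabs hf hs x y
    calc |(s₁ * f x + ε) - (s₁ * f y + ε)| = |s₁ * f x - s₁ * f y| := by ring_nf
    _ ≤ |x - y| := this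
  have h3 : |(s₁ * f a + (x - a)) - (s₁ * f a + (y - a))| ≤ |x - y| := by
    have : (s₁ * f a + (x - a)) - (s₁ * f a + (y - a)) = x - y := by ring
    rw [this]
  have h4 : |(s₁ * f b + (b - x)) - (s₁ * f b + (b - y))| ≤ |x - y| := by
    have : (s₁ * f b + (b - x)) - (s₁ * f b + (b - y)) = y - x := by ring
    rw [this, abs_sub_comm]
  have hmin1 : |min (s₁ * f x + ε) (s₁ * f a + (x - a)) -
      min (s₁ * f y + ε) (s₁ * f a + (y - a))| ≤ |x - y| :=
    le_trans (abs_min_sub_min_le_max _ _ _ _) (max_le h2 h3)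
  have hmin2 : |min (min (s₁ * f x + ε) (s₁ * f a + (x - a))) (s₁ * f b + (b - x)) -
      min (min (s₁ * f y + ε) (s₁ * f a + (y - a))) (s₁ * f b + (b - y))| ≤ |x - y| :=
    le_trans (abs_min_sub_min_le_max _ _ _ _) (max_le hmin1 h4)
  exact le_trans (abs_max_sub_max_le_max _ _ _ _) (max_le h1 hmin2)

lemma modF_outside (hf : LipschitzWith 1 f) (hs : s₁ = 1 ∨ s₁ = -1) {t : ℝ}
    (ht : t ≤ a ∨ b ≤ t) : modF f s₁ a b ε t = s₁ * f t := by
  apply max_eq_left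
  rcases ht with h | h
  · have h1 : s₁ * f a + (t - a) ≤ s₁ * f t := by
      have := sFabs hf hs a t
      have h2 : s₁ * f a - s₁ * f t ≤ |s₁ * f a - s₁ * f t| := le_abs_self _
      rw [abs_of_nonneg (by linarith : (0:ℝ) ≤ a - t)] at this
      linarith
    exact le_trans (le_trans (min_le_left _ _) (min_le_right _ _)) h1
  · have h1 : s₁ * f b + (b - t) ≤ s₁ * f t := by
      have := sFabs hf hs b t
      have h2 : s₁ * f b - s₁ * f t ≤ |s₁ * f b - s₁ * f t| := le_abs_self _
      have h3 : |b - t| = t - b := by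
        rw [abs_sub_comm]; exact abs_of_nonneg (by linarith)
      rw [h3] at this
      linarith
    exact le_trans (min_le_right _ _) h1

lemma modF_ge (t : ℝ) : s₁ * f t ≤ modF f s₁ a b ε t := le_max_left _ _

lemma modF_le (hε : 0 ≤ ε) (t : ℝ) : modF f s₁ a b ε t ≤ s₁ * f t + ε :=
  max_le (by linarith) (le_trans (le_trans (min_le_left _ _) (min_le_left _ _)) le_rfl)

lemma modf_outside (hf : LipschitzWith 1 f) (hs : s₁ = 1 ∨ s₁ = -1) {t : ℝ}
    (ht : ¬(a < t ∧ t < b)) : modf f s₁ a b ε t = f t := by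
  have h : t ≤ a ∨ b ≤ t := by
    rcases le_or_gt t a with h | h
    · exact Or.inl h
    · rcases le_or_gt b t with h' | h'
      · exact Or.inr h'
      · exact absurd ⟨h, h'⟩ ht
  rw [modf, modF_outside hf hs h, ← mul_assoc, sgn_sq hs, one_mul]

lemma modf_close (hf : LipschitzWith 1 f) (hs : s₁ = 1 ∨ s₁ = -1) (hε : 0 ≤ ε) (t : ℝ) :
    |modf f s₁ a b ε t - f t| ≤ ε := by
  have h1 := modF_ge (f := f) (s₁ := s₁) (a := a) (b := b) (ε := ε) t
  have h2 := modF_le (f := f) (s₁ := s₁) (a := a) (b := b) (ε := ε) hε t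
  have key : modf f s₁ a b ε t - f t = s₁ * (modF f s₁ a b ε t - s₁ * f t) := by
    show s₁ * modF f s₁ a b ε t - f t = _
    linear_combination f t * sgn_sq hs
  rw [key, abs_mul, sgn_abs hs, one_mul, abs_of_nonneg (by linarith)]
  linarith

lemma modf_isPath (hf : IsPath f) (hs : s₁ = 1 ∨ s₁ = -1) (ha : 0 ≤ a) :
    IsPath (modf f s₁ a b ε) := by
  constructor
  · rw [modf, modF_outside hf.2 hs (Or.inl ha), ← mul_assoc, sgn_sq hs, one_mul, hf.1]
  · apply lipOfAbs
    intro x y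
    have : modf f s₁ a b ε x - modf f s₁ a b ε y
        = s₁ * (modF f s₁ a b ε x - modF f s₁ a b ε y) := by rw [modf, modf]; ring
    rw [this, abs_mul, sgn_abs hs, one_mul]
    exact modF_abs hf.2 hs x y

end modlems

/- Lemma B: safety of a small localized modification for one combo. -/
lemma lemB (D : ℝ) (hD : 0 < D) (f g : ℝ → ℝ) (hf : IsPath f) (hg : IsPath g)
    (a b : ℝ) (ha0 : 0 ≤ a) (hab : a < b)
    (σ₁ σ₂ : ℝ) (hσ₁ : σ₁ = 1 ∨ σ₁ = -1)
    (hout : meetT D f g σ₁ σ₂ ≤ a ∨ b ≤ meetT D f g σ₁ σ₂) :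
    ∃ η : ℝ, 0 < η ∧ ∀ f' : ℝ → ℝ, IsPath f' →
      (∀ t, ¬(a < t ∧ t < b) → f' t = f t) → (∀ t, |f' t - f t| < η) →
      meetT D f' g σ₁ σ₂ ≤ meetT D f g σ₁ σ₂ := by
  classical
  set S : Set ℝ := {t : ℝ | 0 ≤ t ∧ σ₁ * f t + σ₂ * g t = D} with hSdef
  have hSbdd : BddBelow S := ⟨0, fun x hx => hx.1⟩
  have hmeq : meetT D f g σ₁ σ₂ = sInf S := rfl
  by_cases hS : S.Nonempty
  · -- nonempty case
    have hScl : IsClosed S := by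
      have : S = Set.Ici (0:ℝ) ∩ (fun t => σ₁ * f t + σ₂ * g t) ⁻¹' {D} := by
        ext t; simp [hSdef, Set.mem_setOf_eq, Set.mem_Ici]
      rw [this]
      exact isClosed_Ici.inter (isClosed_singleton.preimage
        ((continuous_const.mul hf.2.continuous).add (continuous_const.mul hg.2.continuous)))
    have hoS : sInf S ∈ S := hScl.csInf_mem hS hSbdd
    rcases hout with hle | hge
    · refine ⟨1, one_pos, fun f' hf' hout' hclose => ?_⟩
      rw [hmeq] at hle ⊢
      have hmem : sInf S ∈ {t : ℝ | 0 ≤ t ∧ σ₁ * f' t + σ₂ * g t = D} := by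
        refine ⟨hoS.1, ?_⟩
        rw [hout' _ (fun h => absurd hle (not_le.mpr h.1))]
        exact hoS.2
      exact csInf_le ⟨0, fun x hx => hx.1⟩ hmem
    · refine ⟨1, one_pos, fun f' hf' hout' hclose => ?_⟩
      rw [hmeq] at hge ⊢
      have hsub : S ⊆ {t : ℝ | 0 ≤ t ∧ σ₁ * f' t + σ₂ * g t = D} := by
        intro t htS
        have hbt : b ≤ t := le_trans hge (csInf_le hSbdd htS)
        refine ⟨htS.1, ?_⟩
        rw [hout' _ (fun h => absurd hbt (not_le.mpr h.2))]
        exact htS.2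
      exact csInf_le_csInf ⟨0, fun x hx => hx.1⟩ hS hsub
  · -- empty case
    have hSempty : S = ∅ := Set.not_nonempty_iff_eq_empty.mp hS
    have hVlt : ∀ t ∈ Set.Icc a b, σ₁ * f t + σ₂ * g t < D := by
      intro t ht
      refine valLtD D hD f g hf hg σ₁ σ₂ t (le_trans ha0 ht.1) (fun t' h0 _ hEq => ?_)
      have : t' ∈ S := ⟨h0, hEq⟩
      rw [hSempty] at this; exact this
    obtain ⟨t₀, ht₀, hmax⟩ := isCompact_Icc.exists_isMaxOn (Set.nonempty_Icc.mpr hab.le)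
      (((continuous_const.mul hf.2.continuous).add (continuous_const.mul hg.2.continuous)).continuousOn)
    rw [isMaxOn_iff] at hmax
    refine ⟨D - (σ₁ * f t₀ + σ₂ * g t₀), by linarith [hVlt t₀ ht₀], fun f' hf' hout' hclose => ?_⟩
    have hS'empty : {t : ℝ | 0 ≤ t ∧ σ₁ * f' t + σ₂ * g t = D} = ∅ := by
      ext t
      simp only [Set.mem_setOf_eq, Set.mem_empty_iff_false, iff_false, not_and]
      intro ht0 hEq
      by_cases hin : a < t ∧ t < b
      · have h1 : σ₁ * f t + σ₂ * g t ≤ σ₁ * f t₀ + σ₂ * g t₀ :=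
          hmax t ⟨hin.1.le, hin.2.le⟩
        have h2 : |σ₁ * f' t - σ₁ * f t| < D - (σ₁ * f t₀ + σ₂ * g t₀) := by
          have : |σ₁ * f' t - σ₁ * f t| = |σ₁| * |f' t - f t| := by
            rw [← abs_mul]; ring_nf
          have habs : |σ₁| = 1 := by rcases hσ₁ with h | h <;> rw [h] <;> norm_num
          rw [this, habs, one_mul]
          exact hclose t
        have h3 : σ₁ * f' t - σ₁ * f t ≤ |σ₁ * f' t - σ₁ * f t| := le_abs_self _
        linarith [hEq ▸ (by linarith : σ₁ * f' t + σ₂ * g t < D)]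
      · have := hout' t hin
        rw [this] at hEq
        have : t ∈ S := ⟨ht0, hEq⟩
        rw [hSempty] at this; exact this
    show sInf _ ≤ sInf S
    rw [hS'empty, hSempty]

lemma main_aux (D : ℝ) (hD : 0 < D) (f g : ℝ → ℝ) (hf : IsPath f) (hg : IsPath g)
    (hNEf : ∀ f' : ℝ → ℝ, IsPath f' → RT D f g ≤ RT D f' g)
    (a b : ℝ) (hab : a < b) (ha : a = 0 ∨ a ∈ MeetSet D f g) (hb : b ∈ MeetSet D f g)
    (hno : ∀ t ∈ Set.Ioo a b, t ∉ MeetSet D f g) :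
    ∃ ε : ℝ, (ε = 1 ∨ ε = -1) ∧ ∀ t ∈ Set.Icc a b, f t = f a + ε * (t - a) := by
  classical
  -- a is nonnegative
  have hMS_nonneg : ∀ x ∈ MeetSet D f g, (0:ℝ) ≤ x := by
    intro x hx
    simp only [MeetSet, Set.mem_insert_iff, Set.mem_singleton_iff] at hx
    rcases hx with h|h|h|h <;> rw [h] <;> exact meetT_nonneg D f g _ _
  have ha0 : 0 ≤ a := by
    rcases ha with h | h
    · rw [h]
    · exact hMS_nonneg a h
  have hb0 : 0 < b := lt_of_le_of_lt ha0 hab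
  -- extract the combo meeting at b
  obtain ⟨s₁, s₂, hs₁, hs₂, hmb⟩ : ∃ s₁ s₂ : ℝ, (s₁ = 1 ∨ s₁ = -1) ∧ (s₂ = 1 ∨ s₂ = -1) ∧
      meetT D f g s₁ s₂ = b := by
    simp only [MeetSet, Set.mem_insert_iff, Set.mem_singleton_iff] at hb
    rcases hb with h|h|h|h
    · exact ⟨1, 1, Or.inl rfl, Or.inl rfl, h.symm⟩
    · exact ⟨-1, -1, Or.inr rfl, Or.inr rfl, h.symm⟩
    · exact ⟨-1, 1, Or.inr rfl, Or.inl rfl, h.symm⟩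
    · exact ⟨1, -1, Or.inl rfl, Or.inr rfl, h.symm⟩
  set S : Set ℝ := {t : ℝ | 0 ≤ t ∧ s₁ * f t + s₂ * g t = D} with hSdef
  have hSbdd : BddBelow S := ⟨0, fun x hx => hx.1⟩
  have hmeq : meetT D f g s₁ s₂ = sInf S := rfl
  have hSne : S.Nonempty := by
    by_contra h
    rw [Set.not_nonempty_iff_eq_empty] at h
    rw [hmeq, h, Real.sInf_empty] at hmb
    linarith
  have hScl : IsClosed S := by
    have : S = Set.Ici (0:ℝ) ∩ (fun t => s₁ * f t + s₂ * g t) ⁻¹' {D} := by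
      ext t; simp [hSdef, Set.mem_setOf_eq, Set.mem_Ici]
    rw [this]
    exact isClosed_Ici.inter (isClosed_singleton.preimage
      ((continuous_const.mul hf.2.continuous).add (continuous_const.mul hg.2.continuous)))
  have hbS : b ∈ S := by
    have := hScl.csInf_mem hSne hSbdd
    rw [← hmeq, hmb] at this; exact this
  have hVb : s₁ * f b + s₂ * g b = D := hbS.2
  have hVlt : ∀ t, 0 ≤ t → t < b → s₁ * f t + s₂ * g t < D := by
    intro t ht0 htb
    refine valLtD D hD f g hf hg s₁ s₂ t ht0 (fun t' h0 h1 hEq => ?_)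
    have ht'S : t' ∈ S := ⟨h0, hEq⟩
    have := csInf_le hSbdd ht'S
    rw [← hmeq, hmb] at this
    linarith
  -- key claim: full speed
  have hkey : b - a ≤ s₁ * f b - s₁ * f a := by
    by_contra hcon
    push_neg at hcon
    -- set up the four safety constants
    have houtc : ∀ x, x ∈ MeetSet D f g → x ≤ a ∨ b ≤ x := by
      intro x hx
      by_contra h
      push_neg at h
      exact hno x ⟨h.1, h.2⟩ hx
    have mem11 : meetT D f g 1 1 ∈ MeetSet D f g := by simp [MeetSet]
    have memmm : meetT D f g (-1) (-1) ∈ MeetSet D f g := by simp [MeetSet]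
    have memm1 : meetT D f g (-1) 1 ∈ MeetSet D f g := by simp [MeetSet]
    have mem1m : meetT D f g 1 (-1) ∈ MeetSet D f g := by simp [MeetSet]
    obtain ⟨η₁, hη₁, hB₁⟩ := lemB D hD f g hf hg a b ha0 hab 1 1 (Or.inl rfl) (houtc _ mem11)
    obtain ⟨η₂, hη₂, hB₂⟩ := lemB D hD f g hf hg a b ha0 hab (-1) (-1) (Or.inr rfl) (houtc _ memmm)
    obtain ⟨η₃, hη₃, hB₃⟩ := lemB D hD f g hf hg a b ha0 hab (-1) 1 (Or.inr rfl) (houtc _ memm1)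
    obtain ⟨η₄, hη₄, hB₄⟩ := lemB D hD f g hf hg a b ha0 hab 1 (-1) (Or.inl rfl) (houtc _ mem1m)
    set ε : ℝ := min (min η₁ η₂) (min η₃ η₄) / 2 with hεdef
    have hminpos : 0 < min (min η₁ η₂) (min η₃ η₄) := lt_min (lt_min hη₁ hη₂) (lt_min hη₃ hη₄)
    have hε : 0 < ε := by positivity
    have hεη₁ : ε < η₁ := by
      have h1 := min_le_left (min η₁ η₂) (min η₃ η₄); have h2 := min_le_left η₁ η₂; linarith
    have hεη₂ : ε < η₂ := by
      have h1 := min_le_left (min η₁ η₂) (min η₃ η₄); have h2 := min_le_right η₁ η₂; linarith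
    have hεη₃ : ε < η₃ := by
      have h1 := min_le_right (min η₁ η₂) (min η₃ η₄); have h2 := min_le_left η₃ η₄; linarith
    have hεη₄ : ε < η₄ := by
      have h1 := min_le_right (min η₁ η₂) (min η₃ η₄); have h2 := min_le_right η₃ η₄; linarith
    -- the modified path
    have hpath : IsPath (modf f s₁ a b ε) := modf_isPath hf hs₁ ha0
    have hout' : ∀ t, ¬(a < t ∧ t < b) → modf f s₁ a b ε t = f t :=
      fun t ht => modf_outside hf.2 hs₁ ht
    have hcl : ∀ t, |modf f s₁ a b ε t - f t| ≤ ε := modf_close hf.2 hs₁ hε.le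
    -- the four comparisons
    have hc₁ := hB₁ _ hpath hout' (fun t => lt_of_le_of_lt (hcl t) hεη₁)
    have hc₂ := hB₂ _ hpath hout' (fun t => lt_of_le_of_lt (hcl t) hεη₂)
    have hc₃ := hB₃ _ hpath hout' (fun t => lt_of_le_of_lt (hcl t) hεη₃)
    have hc₄ := hB₄ _ hpath hout' (fun t => lt_of_le_of_lt (hcl t) hεη₄)
    -- the strict improvement for the main combo
    set t₁ : ℝ := max ((a + b + (s₁ * f b - s₁ * f a)) / 2) (b - ε / 2) with ht₁def
    have hfab : |s₁ * f b - s₁ * f a| ≤ b - a := by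
      have := sFabs hf.2 hs₁ b a
      rwa [abs_of_pos (by linarith : (0:ℝ) < b - a)] at this
    have hfab' : -(b - a) ≤ s₁ * f b - s₁ * f a := by
      have := neg_abs_le (s₁ * f b - s₁ * f a); linarith
    have ht₁a : a ≤ t₁ := le_trans (by linarith : a ≤ (a + b + (s₁ * f b - s₁ * f a)) / 2)
      (le_max_left _ _)
    have ht₁b : t₁ < b := max_lt (by linarith) (by linarith)
    have hline : s₁ * f b + (b - t₁) ≤ modF f s₁ a b ε t₁ := by
      have hm : (a + b + (s₁ * f b - s₁ * f a)) / 2 ≤ t₁ := le_max_left _ _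
      have hm2 : b - ε / 2 ≤ t₁ := le_max_right _ _
      have c1 : s₁ * f b + (b - t₁) ≤ s₁ * f t₁ + ε := by
        have h1 := sFabs hf.2 hs₁ b t₁
        have h2 : |b - t₁| = b - t₁ := abs_of_pos (by linarith)
        rw [h2] at h1
        have h3 := le_abs_self (s₁ * f b - s₁ * f t₁)
        linarith
      have c2 : s₁ * f b + (b - t₁) ≤ s₁ * f a + (t₁ - a) := by linarith
      refine le_trans ?_ (le_max_right _ _)
      exact le_min (le_min c1 c2) le_rfl
    have hGab : s₂ * g b - s₂ * g t₁ ≤ b - t₁ := by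
      have h1 := sFabs hg.2 hs₂ b t₁
      have h2 : |b - t₁| = b - t₁ := abs_of_pos (by linarith)
      rw [h2] at h1
      linarith [le_abs_self (s₂ * g b - s₂ * g t₁)]
    have hV't₁ : D ≤ modF f s₁ a b ε t₁ + s₂ * g t₁ := by linarith
    have hV'a : modF f s₁ a b ε a + s₂ * g a < D := by
      rw [modF_outside hf.2 hs₁ (Or.inl le_rfl)]
      exact hVlt a ha0 hab
    -- IVT
    have hV'cont : Continuous (fun t => modF f s₁ a b ε t + s₂ * g t) :=
      ((lipOfAbs (modF_abs hf.2 hs₁)).continuous).add (continuous_const.mul hg.2.continuous)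
    obtain ⟨t', ht', hVt'⟩ := intermediate_value_Icc ht₁a hV'cont.continuousOn
      ⟨hV'a.le, hV't₁⟩
    have hstrict : meetT D (modf f s₁ a b ε) g s₁ s₂ < b := by
      have hmem : t' ∈ {t : ℝ | 0 ≤ t ∧ s₁ * modf f s₁ a b ε t + s₂ * g t = D} := by
        refine ⟨le_trans ha0 ht'.1, ?_⟩
        have : s₁ * modf f s₁ a b ε t' = modF f s₁ a b ε t' := by
          rw [modf, ← mul_assoc, sgn_sq hs₁, one_mul]
        rw [this]
        exact hVt'
      have := csInf_le (⟨0, fun x hx => hx.1⟩ : BddBelow _) hmem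
      calc meetT D (modf f s₁ a b ε) g s₁ s₂ ≤ t' := this
      _ ≤ t₁ := ht'.2
      _ < b := ht₁b
    have hRTlt : RT D (modf f s₁ a b ε) g < RT D f g := by
      have h5 : meetT D (modf f s₁ a b ε) g s₁ s₂ < meetT D f g s₁ s₂ := by
        rw [hmb]; exact hstrict
      unfold RT
      clear hVb hVlt hbS hScl hSne hmeq hSbdd hVt' ht' hV'cont hV'a hV't₁ hGab hline
        hfab hfab' ht₁a ht₁b hstrict hmb hcon hout' hcl hpath
      clear_value t₁ ε S
      clear ht₁def hεdef hSdef
      rcases hs₁ with h1 | h1 <;> rcases hs₂ with h2 | h2 <;> subst h1 <;> subst h2 <;> linarith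
    exact absurd (hNEf _ hpath) (not_le.mpr hRTlt)
  -- conclude linearity
  refine ⟨s₁, hs₁, fun t ht => ?_⟩
  have h1 : s₁ * f t - s₁ * f a ≤ t - a := by
    have := sFabs hf.2 hs₁ t a
    rw [abs_of_nonneg (by linarith [ht.1] : (0:ℝ) ≤ t - a)] at this
    linarith [le_abs_self (s₁ * f t - s₁ * f a)]
  have h2 : s₁ * f b - s₁ * f t ≤ b - t := by
    have := sFabs hf.2 hs₁ b t
    rw [abs_of_nonneg (by linarith [ht.2] : (0:ℝ) ≤ b - t)] at this
    linarith [le_abs_self (s₁ * f b - s₁ * f t)]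
  have heq : s₁ * f t = s₁ * f a + (t - a) := by linarith
  linear_combination s₁ * heq - (f t - f a) * sgn_sq hs₁

lemma meetT_swap (D : ℝ) (f g : ℝ → ℝ) (s₁ s₂ : ℝ) :
    meetT D f g s₁ s₂ = meetT D g f s₂ s₁ := by
  unfold meetT
  congr 1
  ext t
  constructor <;> rintro ⟨h1, h2⟩ <;> exact ⟨h1, by linarith⟩

lemma RT_swap (D : ℝ) (f g : ℝ → ℝ) : RT D f g = RT D g f := by
  unfold RT
  rw [meetT_swap D f g 1 1, meetT_swap D f g (-1) (-1), meetT_swap D f g (-1) 1,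
    meetT_swap D f g 1 (-1)]
  ring

lemma MeetSet_swap (D : ℝ) (f g : ℝ → ℝ) : MeetSet D f g = MeetSet D g f := by
  unfold MeetSet
  rw [meetT_swap D f g 1 1, meetT_swap D f g (-1) (-1), meetT_swap D f g (-1) 1,
    meetT_swap D f g 1 (-1), Set.pair_comm]


/-- In the no-gift asymmetric rendezvous game on the line, at any Nash
equilibrium `(f, g)` each player moves at unit speed in a fixed direction (no
turns) on every maximal interval between consecutive meeting times: on each
interval `[a, b]` with `a` either `0` or a meeting time, `b` a meeting time,
and no meeting time strictly between, each path is linear with slope `±1`. -/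
theorem NE_no_turns_between_meetings (D : ℝ) (hD : 0 < D) (f g : ℝ → ℝ)
    (hf : IsPath f) (hg : IsPath g)
    (hNEf : ∀ f' : ℝ → ℝ, IsPath f' → RT D f g ≤ RT D f' g)
    (hNEg : ∀ g' : ℝ → ℝ, IsPath g' → RT D f g ≤ RT D f g') :
    ∀ a b : ℝ, a < b → (a = 0 ∨ a ∈ MeetSet D f g) → b ∈ MeetSet D f g →
      (∀ t ∈ Set.Ioo a b, t ∉ MeetSet D f g) →
      (∃ ε : ℝ, (ε = 1 ∨ ε = -1) ∧ ∀ t ∈ Set.Icc a b, f t = f a + ε * (t - a)) ∧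
      (∃ ε : ℝ, (ε = 1 ∨ ε = -1) ∧ ∀ t ∈ Set.Icc a b, g t = g a + ε * (t - a)) := by
  intro a b hab ha hb hno
  constructor
  · exact main_aux D hD f g hf hg hNEf a b hab ha hb hno
  · have hNEg' : ∀ g' : ℝ → ℝ, IsPath g' → RT D g f ≤ RT D g' f := by
      intro g' hg'
      rw [← RT_swap D f g, ← RT_swap D f g']
      exact hNEg g' hg'
    refine main_aux D hD g f hg hf hNEg' a b hab ?_ ?_ ?_
    · rwa [← MeetSet_swap]
    · rwa [← MeetSet_swap]
    · intro t ht
      rw [← MeetSet_swap]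
      exact hno t ht
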